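/- (Hopf trace formula) Let R be a commutative ring and let C_• be a bounded chain complex of finitely generated free R-modules whose homology modules H_q(C) are all free. If f_• : C_• → C_• is a chain map, then ∑_q (-1)^q Tr(f_q : C_q → C_q) = ∑_q (-1)^q Tr(H_q(f) : H_q(C) → H_q(C)). -/

import Mathlib

/-!
Over a general commutative ring only the free modules `C_n` and `H_n` carry traces, so cycles
and boundaries are handled through projections `e` of `C_n` onto them and the traces
`tr (e ∘ f_n)`. Given a projection onto `Z_n`, a section of `Z_n → H_n` (which exists since `H_n`
is projective) splits off `H_n` and yields a projection onto `B_n` with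
`tr (e_Z ∘ f_n) = tr (e_B ∘ f_n) + tr (H_n f)`. Lifting a projection `e_B` onto `B_n` through
`d : C_{n+1} → B_n` to `σ` yields the projection `1 - σ ∘ d` onto `Z_{n+1}`, and cyclicity of
the trace gives `tr f_{n+1} = tr (e_Z ∘ f_{n+1}) + tr (e_B ∘ f_n)`. The alternating sum thus
telescopes to `± tr (e_B ∘ f_N)`, which vanishes because `B_N = 0`.
-/

open CategoryTheory LinearMap

universe u v

namespace LinearMap

variable {R M N K H : Type*} [CommRing R] [AddCommGroup M] [Module R M] [Module.Free R M]
  [Module.Finite R M] [AddCommGroup N] [Module R N] [AddCommGroup K] [Module R K]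
  [AddCommGroup H] [Module R H]

theorem exists_isProj_map_ker_and_trace_comp_eq [Module.Free R H] [Module.Finite R H]
    {i : K →ₗ[R] M} (hi : Function.Injective i) {π : K →ₗ[R] H} (hπ : Function.Surjective π)
    {F : M →ₗ[R] M} {Fk : K →ₗ[R] K} {Fh : H →ₗ[R] H}
    (hiF : F ∘ₗ i = i ∘ₗ Fk) (hπF : π ∘ₗ Fk = Fh ∘ₗ π)
    {e : M →ₗ[R] M} (he : IsProj (range i) e) :
    ∃ e' : M →ₗ[R] M, IsProj ((ker π).map i) e' ∧
      trace R M (e ∘ₗ F) = trace R M (e' ∘ₗ F) + trace R H Fh := by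
  obtain ⟨s, hs⟩ := Module.projective_lifting_property π LinearMap.id hπ
  set r : M →ₗ[R] K := (LinearEquiv.ofInjective i hi).symm.toLinearMap ∘ₗ he.codRestrict
  have hir : i ∘ₗ r = e := by ext x; simp [r]
  have hri (k : K) : r (i k) = k :=
    hi (by simpa [← comp_apply i r, hir] using he.map_id _ (mem_range_self i k))
  have hπs (y : H) : π (s y) = y := DFunLike.congr_fun hs y
  refine ⟨i ∘ₗ (LinearMap.id - s ∘ₗ π) ∘ₗ r, ⟨fun x => ?_, ?_⟩, ?_⟩
  · exact Submodule.mem_map_of_mem (by simp [hπs])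
  · rintro _ ⟨k, hk, rfl⟩
    simp [hri, mem_ker.1 hk]
  · have hsplit : e = i ∘ₗ (LinearMap.id - s ∘ₗ π) ∘ₗ r + (i ∘ₗ s) ∘ₗ (π ∘ₗ r) := by
      rw [← hir]; ext x; simp
    have hcycle : (π ∘ₗ r ∘ₗ F) ∘ₗ (i ∘ₗ s) = Fh := by
      ext y
      simp [← comp_apply F i, hiF, hri, ← comp_apply π Fk, hπF, hπs]
    rw [hsplit, add_comp, map_add, ← hcycle, ← trace_comp_comm' (π ∘ₗ r ∘ₗ F) (i ∘ₗ s)]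
    rfl

theorem exists_isProj_ker_and_trace_eq [Module.Free R N] [Module.Finite R N]
    {D : N →ₗ[R] M} {G : N →ₗ[R] N} {F : M →ₗ[R] M} (hDG : D ∘ₗ G = F ∘ₗ D)
    {e : M →ₗ[R] M} (he : IsProj (range D) e) :
    ∃ e' : N →ₗ[R] N, IsProj (ker D) e' ∧
      trace R N G = trace R N (e' ∘ₗ G) + trace R M (e ∘ₗ F) := by
  obtain ⟨σ, hσ⟩ := Module.projective_lifting_property D.rangeRestrict he.codRestrict
    D.surjective_rangeRestrict
  have hDσ : D ∘ₗ σ = e := by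
    ext x
    exact congrArg Subtype.val (DFunLike.congr_fun hσ x)
  refine ⟨LinearMap.id - σ ∘ₗ D, ⟨fun x => ?_, fun x hx => ?_⟩, ?_⟩
  · simp [← comp_apply D σ, hDσ, he.map_id _ (mem_range_self D x)]
  · simp [mem_ker.1 hx]
  · have hcross : trace R N ((σ ∘ₗ D) ∘ₗ G) = trace R M (e ∘ₗ F) := by
      rw [comp_assoc, hDG, ← comp_assoc, trace_comp_comm', ← comp_assoc, hDσ]
    rw [sub_comp, map_sub, hcross, id_comp, sub_add_cancel]

end LinearMap

namespace HomologicalComplex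

variable {R : Type u} [CommRing R] {ι : Type*} {c : ComplexShape ι}
  (K : HomologicalComplex (ModuleCat.{v} R) c)

theorem range_iCycles_hom {i j : ι} (hj : c.next i = j) :
    range (K.iCycles i).hom = ker (K.d i j).hom :=
  (ShortComplex.exact_of_f_is_kernel (.mk _ _ (K.iCycles_d i j))
    (K.cyclesIsKernel i j hj)).moduleCat_range_eq_ker

theorem map_iCycles_hom_ker_homologyπ_hom {i j : ι} (hi : c.prev j = i) :
    (ker (K.homologyπ j).hom).map (K.iCycles j).hom = range (K.d i j).hom := by
  rw [← (ShortComplex.exact_of_g_is_cokernel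
      (.mk _ _ (K.toCycles_comp_homologyπ i j))
      (K.homologyIsCokernel i j hi)).moduleCat_range_eq_ker,
    ← range_comp, ← ModuleCat.hom_comp, toCycles_i]

theorem injective_iCycles_hom (i : ι) : Function.Injective (K.iCycles i).hom :=
  (ModuleCat.mono_iff_injective _).1 inferInstance

theorem surjective_homologyπ_hom (i : ι) : Function.Surjective (K.homologyπ i).hom :=
  (ModuleCat.epi_iff_surjective _).1 inferInstance

variable (φ : K ⟶ K)

theorem exists_isProj_range_d_and_trace_comp_eq {i j : ι} (hi : c.prev j = i)
    [Module.Free R (K.X j)] [Module.Finite R (K.X j)]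
    [Module.Free R (K.homology j)] [Module.Finite R (K.homology j)]
    {e : K.X j →ₗ[R] K.X j} (he : IsProj (range (K.iCycles j).hom) e) :
    ∃ e' : K.X j →ₗ[R] K.X j, IsProj (range (K.d i j).hom) e' ∧
      trace R (K.X j) (e ∘ₗ (φ.f j).hom) =
        trace R (K.X j) (e' ∘ₗ (φ.f j).hom) + trace R (K.homology j) (homologyMap φ j).hom := by
  rw [← K.map_iCycles_hom_ker_homologyπ_hom hi]
  exact exists_isProj_map_ker_and_trace_comp_eq (K.injective_iCycles_hom j)
    (K.surjective_homologyπ_hom j) (congrArg ModuleCat.Hom.hom (cyclesMap_i φ j)).symm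
    (congrArg ModuleCat.Hom.hom (homologyπ_naturality φ j)).symm he

theorem exists_isProj_range_iCycles_and_trace_eq {i j : ι} (hj : c.next i = j)
    [Module.Free R (K.X i)] [Module.Finite R (K.X i)]
    [Module.Free R (K.X j)] [Module.Finite R (K.X j)]
    {e : K.X j →ₗ[R] K.X j} (he : IsProj (range (K.d i j).hom) e) :
    ∃ e' : K.X i →ₗ[R] K.X i, IsProj (range (K.iCycles i).hom) e' ∧
      trace R (K.X i) (φ.f i).hom =
        trace R (K.X i) (e' ∘ₗ (φ.f i).hom) + trace R (K.X j) (e ∘ₗ (φ.f j).hom) := by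
  rw [K.range_iCycles_hom hj]
  exact exists_isProj_ker_and_trace_eq (congrArg ModuleCat.Hom.hom (φ.comm i j)) he

end HomologicalComplex

namespace ChainComplex

variable {R : Type u} [CommRing R] (C : ChainComplex (ModuleCat.{v} R) ℕ)

theorem isProj_range_iCycles_zero_id :
    IsProj (range (C.iCycles 0).hom) (LinearMap.id : C.X 0 →ₗ[R] C.X 0) := by
  rw [C.range_iCycles_hom (ChainComplex.next_nat_zero), C.shape 0 0 (by simp), ModuleCat.hom_zero,
    ker_zero]
  exact ⟨fun _ => Submodule.mem_top, fun _ _ => rfl⟩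

variable (f : C ⟶ C) [∀ n, Module.Free R (C.X n)] [∀ n, Module.Finite R (C.X n)]
  [∀ n, Module.Free R (C.homology n)] [∀ n, Module.Finite R (C.homology n)]

theorem exists_isProj_range_d_and_alternating_sum_eq (n : ℕ) :
    ∃ e : C.X n →ₗ[R] C.X n, IsProj (range (C.d (n + 1) n).hom) e ∧
      ∑ k ∈ Finset.range (n + 1), (-1 : R) ^ k *
          (trace R (C.X k) (f.f k).hom -
            trace R (C.homology k) (HomologicalComplex.homologyMap f k).hom) =
        (-1 : R) ^ n * trace R (C.X n) (e ∘ₗ (f.f n).hom) := by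
  induction n with
  | zero =>
    obtain ⟨e, he, htr⟩ := C.exists_isProj_range_d_and_trace_comp_eq f (ChainComplex.prev ℕ 0)
      C.isProj_range_iCycles_zero_id
    refine ⟨e, he, ?_⟩
    rw [id_comp] at htr
    rw [Finset.sum_range_one, htr]
    ring
  | succ n ih =>
    obtain ⟨e, he, hsum⟩ := ih
    obtain ⟨eZ, heZ, htrZ⟩ := C.exists_isProj_range_iCycles_and_trace_eq f
      (ChainComplex.next_nat_succ n) he
    obtain ⟨e', he', htrB⟩ := C.exists_isProj_range_d_and_trace_comp_eq f
      (ChainComplex.prev ℕ (n + 1)) heZ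
    refine ⟨e', he', ?_⟩
    rw [Finset.sum_range_succ, hsum, htrZ, htrB]
    ring

end ChainComplex

/-- Hopf trace formula: for a bounded chain complex of finitely generated free
modules with free homology, and a chain self-map `f`, the alternating sum of the
traces of `f` on the chain modules equals the alternating sum of the traces of
the induced maps on homology. -/
theorem hopf_trace_formula {R : Type} [CommRing R]
    (C : ChainComplex (ModuleCat.{0} R) ℕ) (f : C ⟶ C) (N : ℕ)
    [∀ n, Module.Free R (C.X n)] [∀ n, Module.Finite R (C.X n)]
    [∀ n, Module.Free R (C.homology n)] [∀ n, Module.Finite R (C.homology n)]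
    (hbdd : ∀ n, N < n → Subsingleton (C.X n)) :
    ∑ n ∈ Finset.range (N + 1), (-1 : R) ^ n * LinearMap.trace R (C.X n) (f.f n).hom =
      ∑ n ∈ Finset.range (N + 1),
        (-1 : R) ^ n * LinearMap.trace R (C.homology n) (HomologicalComplex.homologyMap f n).hom := by
  obtain ⟨e, he, hsum⟩ := C.exists_isProj_range_d_and_alternating_sum_eq f N
  have : Subsingleton (C.X (N + 1)) := hbdd (N + 1) N.lt_succ_self
  have he0 : e = 0 := by
    ext x
    simpa [range_eq_bot.2 (Subsingleton.elim _ 0)] using he.map_mem x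
  rw [he0, zero_comp, map_zero, mul_zero] at hsum
  simpa only [mul_sub, Finset.sum_sub_distrib, sub_eq_zero] using hsum
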